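/- Let π_K and π_D be groups with π_D metabelian (π_D⁽²⁾ = 1), and let ι : π_K → π_D be a homomorphism. Suppose the induced map π_K⁽¹⁾/π_K⁽²⁾ → π_D⁽¹⁾/π_D⁽²⁾ is surjective and the induced map π_K/π_K⁽¹⁾ → π_D/π_D⁽¹⁾ is an isomorphism. Then ι is surjective. -/
import Mathlib


/-- if `ι : π_K → π_D` with `π_D` metabelian induces a surjection
`π_K⁽¹⁾/π_K⁽²⁾ → π_D⁽¹⁾/π_D⁽²⁾` and an isomorphism on abelianizations, then `ι` is
surjective. -/
theorem metabelian_homotopy_ribbon_criterion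
    (πK πD : Type*) [Group πK] [Group πD]
    (hmeta : derivedSeries πD 2 = ⊥)
    (ι : πK →* πD)
    -- the induced map `π_K⁽¹⁾/π_K⁽²⁾ → π_D⁽¹⁾/π_D⁽²⁾` is surjective:
    (hdersurj : ∀ y ∈ derivedSeries πD 1, ∃ x ∈ derivedSeries πK 1,
      ι x * y⁻¹ ∈ derivedSeries πD 2)
    -- the induced map on abelianizations is surjective:
    (habsurj : ∀ y : πD, ∃ x : πK, ι x * y⁻¹ ∈ derivedSeries πD 1)
    -- the induced map on abelianizations is injective:
    (habinj : ∀ x : πK, ι x ∈ derivedSeries πD 1 → x ∈ derivedSeries πK 1) :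
    Function.Surjective ι := by
  intro y
  obtain ⟨x, hx⟩ := habsurj y
  obtain ⟨x', -, hx'⟩ := hdersurj _ hx
  rw [hmeta, Subgroup.mem_bot] at hx'
  refine ⟨x'⁻¹ * x, ?_⟩
  have : ι x' = ι x * y⁻¹ := by
    have := mul_inv_eq_one.mp hx'
    simpa using this
  simp [map_mul, this]
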